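/- arXiv:1411.7890 — 2 statements merged into one kernel-verified Lean document; each statement's English description precedes it below -/
import Mathlib

section
/- The number of minimal prime ideals of the polarization I^℘ equals dim_K S/I, which in turn equals the number of monomials in Mon(S∖I). -/
open MvPolynomial

noncomputable section

/-- The vertex set / variable set `𝒮` of the polarized ring `S^℘`: pairs `⟨i, j⟩` with
`1 ≤ i ≤ n`, `1 ≤ j ≤ b i`.  Here `j : Fin (b i)` encodes the paper's second index `j + 1`,
so the vertex `⟨i, j⟩` stands for the variable `x_{i, j+1}` of the paper. -/
abbrev PolVars (m : ℕ) (b : Fin m → ℕ) := Σ i : Fin m, Fin (b i)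

/-- `I` is a monomial ideal, i.e. generated by monomials. -/
def IsMonomialIdeal {K : Type} [Field K] {m : ℕ} (I : Ideal (MvPolynomial (Fin m) K)) : Prop :=
  ∃ A : Set (Fin m →₀ ℕ), I = Ideal.span ((fun c => (monomial c (1 : K))) '' A)

/-- The exponent vectors of the minimal monomial generators of a monomial ideal:
the exponent vectors of monomials of `I` that are minimal under divisibility. -/
def MinGens (K : Type) [Field K] {m : ℕ} (I : Ideal (MvPolynomial (Fin m) K)) :
    Set (Fin m →₀ ℕ) :=
  {c | (monomial c (1 : K)) ∈ I ∧ ∀ c' : Fin m →₀ ℕ, c' ≤ c → c' ≠ c →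
      (monomial c' (1 : K)) ∉ I}

/-- The polarization `v^℘ = ∏_{i=1}^n ∏_{j=1}^{c_i} x_{i,j}` of the monomial `v = x^c`. -/
def polMon (K : Type) [Field K] {m : ℕ} (b : Fin m → ℕ) (c : Fin m →₀ ℕ) :
    MvPolynomial (PolVars m b) K :=
  ∏ v ∈ Finset.univ.filter (fun v : PolVars m b => (v.2 : ℕ) < c v.1), X v

/-- The polarization `I^℘ ⊆ S^℘` of the monomial ideal `I`, generated by the
polarizations of the minimal monomial generators of `I`. -/
def polarIdeal (K : Type) [Field K] {m : ℕ} (b : Fin m → ℕ)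
    (I : Ideal (MvPolynomial (Fin m) K)) : Ideal (MvPolynomial (PolVars m b) K) :=
  Ideal.span (polMon K b '' MinGens K I)

/-- The squarefree monomial `x_{1,a_1+1} ⋯ x_{n,a_n+1} ∈ S^℘` associated with the
exponent vector `a` of a monomial `x^a ∈ Mon(S∖I)`. -/
def genL (K : Type) [Field K] {m : ℕ} (b : Fin m → ℕ) (a : Fin m →₀ ℕ) :
    MvPolynomial (PolVars m b) K :=
  ∏ v ∈ Finset.univ.filter (fun v : PolVars m b => (v.2 : ℕ) = a v.1), X v

/-- The ideal `L(I) ⊆ S^℘`, generated by the monomials `x_{1,a_1+1} ⋯ x_{n,a_n+1}`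
with `x^a ∈ Mon(S∖I)`. -/
def LIdeal (K : Type) [Field K] {m : ℕ} (b : Fin m → ℕ)
    (I : Ideal (MvPolynomial (Fin m) K)) : Ideal (MvPolynomial (PolVars m b) K) :=
  Ideal.span (genL K b '' {a | (monomial a (1 : K)) ∉ I})

/-- The monomial prime ideal `φ(x^a) = (x_{1,a_1+1}, …, x_{n,a_n+1}) ⊆ S^℘`. -/
def phiIdeal (K : Type) [Field K] {m : ℕ} (b : Fin m → ℕ) (a : Fin m →₀ ℕ) :
    Ideal (MvPolynomial (PolVars m b) K) :=
  Ideal.span ((fun v => (X v : MvPolynomial (PolVars m b) K)) ''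
    {v : PolVars m b | (v.2 : ℕ) = a v.1})

/-- The set of faces of the simplicial complex `Δ(I)` on the vertex set `𝒮`, whose
Stanley–Reisner ideal is `I^℘`: a finite set `F` of vertices is a face iff the
squarefree monomial `∏_{v ∈ F} v` does not belong to `I^℘`. -/
def facesDelta (K : Type) [Field K] {m : ℕ} (b : Fin m → ℕ)
    (I : Ideal (MvPolynomial (Fin m) K)) : Set (Finset (PolVars m b)) :=
  {F | (∏ v ∈ F, (X v : MvPolynomial (PolVars m b) K)) ∉ polarIdeal K b I}

/-- `F` is a facet (maximal face) of the simplicial complex (set of faces) `Δ`. -/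
def IsFacetOf {V : Type} (Δ : Set (Finset V)) (F : Finset V) : Prop :=
  F ∈ Δ ∧ ∀ G ∈ Δ, F ⊆ G → F = G

/-- Zero-dimensionality data for a monomial ideal: `I` is a proper monomial ideal and,
for each `i`, `b i ≥ 1` is the smallest positive integer with `x_i^{b i} ∈ I`
(equivalently, `dim S/I = 0` with the `b i` minimal). -/
def ZeroDimData (K : Type) [Field K] {m : ℕ} (b : Fin m → ℕ)
    (I : Ideal (MvPolynomial (Fin m) K)) : Prop :=
  IsMonomialIdeal I ∧ I ≠ ⊤ ∧ ∀ i : Fin m, 1 ≤ b i ∧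
    (monomial (Finsupp.single i (b i)) (1 : K)) ∈ I ∧
    ∀ j : ℕ, j < b i → (monomial (Finsupp.single i j) (1 : K)) ∉ I

/-- The deletion `del_Δ(v) = {G ∈ Δ : v ∉ G}`. -/
def delC {V : Type} (Δ : Set (Finset V)) (v : V) : Set (Finset V) :=
  {G ∈ Δ | v ∉ G}

/-- The link `link_Δ(v) = {G ∈ Δ : v ∉ G and G ∪ {v} ∈ Δ}`. -/
def linkC {V : Type} [DecidableEq V] (Δ : Set (Finset V)) (v : V) : Set (Finset V) :=
  {G ∈ Δ | v ∉ G ∧ insert v G ∈ Δ}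

/-- Vertex decomposability of a simplicial complex (given as its set of faces):
`Δ` is vertex decomposable if it is a simplex, or it contains a vertex `v` such that
(i) every facet of `del_Δ(v)` is a facet of `Δ` (`v` is a shedding vertex), and
(ii) both `del_Δ(v)` and `link_Δ(v)` are vertex decomposable. -/
inductive IsVertexDecomposable {V : Type} [DecidableEq V] : Set (Finset V) → Prop
  | simplex (F : Finset V) : IsVertexDecomposable {G | G ⊆ F}
  | shed (Δ : Set (Finset V)) (v : V) (hv : {v} ∈ Δ)
      (hshed : ∀ F : Finset V, IsFacetOf (delC Δ v) F → IsFacetOf Δ F)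
      (hdel : IsVertexDecomposable (delC Δ v))
      (hlink : IsVertexDecomposable (linkC Δ v)) : IsVertexDecomposable Δ

/-- The vertex map replacing `x_{i₀,j}` by `x_{i₀,j-1}` and fixing all other vertices. -/
def shiftDown {m : ℕ} {b : Fin m → ℕ} (i₀ : Fin m) (v : PolVars m b) : PolVars m b :=
  ⟨v.1, ⟨(v.2 : ℕ) - (if v.1 = i₀ then 1 else 0),
    Nat.lt_of_le_of_lt (Nat.sub_le _ _) v.2.isLt⟩⟩

/-- `set(u)` for a generator `u = genL a` of `L(I)` with respect to the order `r`:
the set of variables `x` of `S^℘` such that `x·u` lies in the ideal generated by the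
generators of `L(I)` preceding `u`. -/
def setOfGen (K : Type) [Field K] {m : ℕ} (b : Fin m → ℕ)
    (I : Ideal (MvPolynomial (Fin m) K))
    (r : (Fin m →₀ ℕ) → (Fin m →₀ ℕ) → Prop) (a : Fin m →₀ ℕ) : Set (PolVars m b) :=
  {v | ∃ a' : Fin m →₀ ℕ, (monomial a' (1 : K)) ∉ I ∧ r a' a ∧ a' ≠ a ∧
      genL K b a' ∣ X v * genL K b a}

/-- `J(u,i)`: the weakly increasing sequence of the second indices of the variables
`x_{i,·}` dividing the monomial with exponent vector `e` (counted with multiplicity). -/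
def rowList {m : ℕ} {b : Fin m → ℕ} (e : PolVars m b →₀ ℕ) (i : Fin m) : List ℕ :=
  Multiset.sort (∑ j : Fin (b i), Multiset.replicate (e ⟨i, j⟩) (j : ℕ)) (· ≤ ·)

/-- Lexicographic (weak) order on sequences of natural numbers. -/
def lexLE (l l' : List ℕ) : Prop := l = l' ∨ List.Lex (· < ·) l l'

/-- The exponent vectors of the (minimal) monomial generators of `L(I)^k`:
products of `k` generators of `L(I)`. -/
def GLkE (K : Type) [Field K] {m : ℕ} (b : Fin m → ℕ)
    (I : Ideal (MvPolynomial (Fin m) K)) (k : ℕ) : Set (PolVars m b →₀ ℕ) :=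
  {e | ∃ f : Fin k → (Fin m →₀ ℕ), (∀ j, (monomial (f j) (1 : K)) ∉ I) ∧
      (monomial e (1 : K) : MvPolynomial (PolVars m b) K) = ∏ j, genL K b (f j)}

/-- The depth of a module `M` with respect to the ideal `J`: the maximal length of an
`M`-regular sequence consisting of elements of `J`. -/
def myDepth (R : Type) [CommRing R] (J : Ideal R) (M : Type) [AddCommGroup M]
    [Module R M] : ℕ :=
  sSup {k : ℕ | ∃ rs : List R, rs.length = k ∧ (∀ r ∈ rs, r ∈ J) ∧
      RingTheory.Sequence.IsRegular M rs}

/-- `max{deg lcm(u_1, …, u_k) : u_1, …, u_k ∈ Mon(S∖I)}`; the degree of the lcm of the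
monomials `x^{f 1}, …, x^{f k}` is `∑_i max_j (f j) i`. -/
def maxLcmDeg (K : Type) [Field K] {m : ℕ} (I : Ideal (MvPolynomial (Fin m) K))
    (k : ℕ) : ℕ :=
  sSup {d : ℕ | ∃ f : Fin k → (Fin m →₀ ℕ), (∀ j, (monomial (f j) (1 : K)) ∉ I) ∧
      d = ∑ i : Fin m, Finset.univ.sup (fun j => (f j) i)}

/-!
A prime `P ⊇ I^℘` contains a variable of every row `i`, because the polarization of
`x_i^{b_i}` is a product of such variables. Choosing in each row the least one gives a monomial
`x^a ∉ I` with `φ(x^a) ⊆ P`: a minimal generator `x^c` of `I` dividing `x^a` would force a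
smaller choice in some row. Conversely every `φ(x^a)` with `x^a ∉ I` contains `I^℘`, and
distinct such `a` give incomparable primes, so the minimal primes of `I^℘` are exactly these
`φ(x^a)`. Finally, since `I` is a monomial ideal, the standard monomials `Mon(S∖I)` form a
`K`-basis of `S/I`.
-/

namespace MvPolynomial

variable {σ R : Type*} [CommRing R]

theorem monomial_one_mem_of_le {I : Ideal (MvPolynomial σ R)} {d e : σ →₀ ℕ}
    (hd : monomial d (1 : R) ∈ I) (hde : d ≤ e) : monomial e (1 : R) ∈ I := by
  rw [← tsub_add_cancel_of_le hde, ← mul_one (1 : R), ← monomial_mul]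
  exact I.mul_mem_left _ hd

open Classical in
theorem span_X_image_eq_ker (s : Set σ) :
    Ideal.span (X '' s : Set (MvPolynomial σ R)) =
      RingHom.ker (aeval (R := R) fun i => if i ∈ s then 0 else (X i : MvPolynomial σ R)) := by
  set q : MvPolynomial σ R →ₐ[R] MvPolynomial σ R := aeval fun i => if i ∈ s then 0 else X i
  set J := Ideal.span (X '' s : Set (MvPolynomial σ R))
  have hX : ∀ i, X i - q (X i) ∈ J := fun i => by
    by_cases hi : i ∈ s
    · simpa [q, hi] using Ideal.subset_span (Set.mem_image_of_mem X hi)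
    · simp [q, hi]
  have hsub : ∀ p, p - q p ∈ J := fun p => by
    induction p using MvPolynomial.induction_on with
    | C a => simp
    | add p p' hp hp' => simpa [add_sub_add_comm] using J.add_mem hp hp'
    | mul_X p i hp =>
      have : p * X i - q (p * X i) = (p - q p) * X i + q p * (X i - q (X i)) := by
        rw [map_mul]; ring
      exact this ▸ J.add_mem (J.mul_mem_right _ hp) (J.mul_mem_left _ (hX i))
  refine le_antisymm ?_ fun p hp => by simpa [RingHom.mem_ker.mp hp] using hsub p
  rw [Ideal.span_le]
  rintro _ ⟨i, hi, rfl⟩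
  simp [q, hi]

theorem isPrime_span_X_image [IsDomain R] (s : Set σ) :
    (Ideal.span (X '' s : Set (MvPolynomial σ R))).IsPrime := by
  classical
  rw [span_X_image_eq_ker]
  exact RingHom.ker_isPrime _

theorem X_mem_span_X_image_iff [Nontrivial R] {s : Set σ} {w : σ} :
    (X w : MvPolynomial σ R) ∈ Ideal.span (X '' s) ↔ w ∈ s := by
  classical
  rw [span_X_image_eq_ker, RingHom.mem_ker]
  by_cases hw : w ∈ s <;> simp [hw, X_ne_zero]

end MvPolynomial

section Polarization

variable {K : Type} [Field K] {m : ℕ} {b : Fin m → ℕ} {I : Ideal (MvPolynomial (Fin m) K)}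

theorem IsMonomialIdeal.mem_iff (hI : IsMonomialIdeal I) {p : MvPolynomial (Fin m) K} :
    p ∈ I ↔ ∀ d ∈ p.support, monomial d (1 : K) ∈ I := by
  obtain ⟨A, rfl⟩ := hI
  simp [mem_ideal_span_monomial_image]

theorem IsMonomialIdeal.finrank_quotient_eq_ncard (hI : IsMonomialIdeal I)
    (hfin : {a : Fin m →₀ ℕ | monomial a (1 : K) ∉ I}.Finite) :
    Module.finrank K (MvPolynomial (Fin m) K ⧸ I)
      = {a : Fin m →₀ ℕ | monomial a (1 : K) ∉ I}.ncard := by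
  set T := {a : Fin m →₀ ℕ | monomial a (1 : K) ∉ I}
  have := hfin.fintype
  let f : MvPolynomial (Fin m) K →ₗ[K] (T → K) := LinearMap.pi fun t => lcoeff K t.1
  have hker : LinearMap.ker f = I.restrictScalars K := by
    ext p
    rw [LinearMap.mem_ker, Submodule.restrictScalars_mem, hI.mem_iff, funext_iff]
    simp only [f, LinearMap.pi_apply, lcoeff_apply, Pi.zero_apply, mem_support_iff]
    exact ⟨fun h d hd => by_contra fun hdI => hd (h ⟨d, hdI⟩),
      fun h t => by_contra fun ht => t.2 (h _ ht)⟩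
  have hsurj : Function.Surjective f := fun g => by
    classical
    refine ⟨∑ t : T, monomial t.1 (g t), funext fun t => ?_⟩
    simp [f, coeff_monomial, ← Subtype.ext_iff]
  let e : (MvPolynomial (Fin m) K ⧸ I) ≃ₗ[K] (T → K) :=
    (Submodule.Quotient.restrictScalarsEquiv K I).symm ≪≫ₗ
      Submodule.quotEquivOfEq _ _ hker.symm ≪≫ₗ f.quotKerEquivOfSurjective hsurj
  rw [e.finrank_eq, Module.finrank_fintype_fun_eq_card, ← Nat.card_eq_fintype_card,
    Nat.card_coe_set_eq]

theorem exists_mem_minGens_le {d : Fin m →₀ ℕ} (hd : monomial d (1 : K) ∈ I) :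
    ∃ c ∈ MinGens K I, c ≤ d := by
  obtain ⟨c, ⟨hcI, hcd⟩, hmin⟩ :=
    wellFounded_lt.has_min {c | monomial c (1 : K) ∈ I ∧ c ≤ d} ⟨d, hd, le_rfl⟩
  exact ⟨c, ⟨hcI, fun c' hle hne hc'I => hmin c' ⟨hc'I, hle.trans hcd⟩ (hle.lt_of_ne hne)⟩, hcd⟩

theorem ZeroDimData.lt_of_monomial_notMem (hZ : ZeroDimData K b I) {a : Fin m →₀ ℕ}
    (ha : monomial a (1 : K) ∉ I) (i : Fin m) : a i < b i := by
  by_contra! h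
  exact ha (monomial_one_mem_of_le (hZ.2.2 i).2.1 (Finsupp.single_le_iff.mpr h))

theorem ZeroDimData.finite_setOf_monomial_notMem (hZ : ZeroDimData K b I) :
    {a : Fin m →₀ ℕ | monomial a (1 : K) ∉ I}.Finite :=
  (Set.finite_Iic (Finsupp.equivFunOnFinite.symm b)).subset fun _ ha i =>
    (hZ.lt_of_monomial_notMem ha i).le

theorem polMon_mem_iff_of_isPrime {P : Ideal (MvPolynomial (PolVars m b) K)} [P.IsPrime]
    (c : Fin m →₀ ℕ) : polMon K b c ∈ P ↔ ∃ v : PolVars m b, (v.2 : ℕ) < c v.1 ∧ X v ∈ P := by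
  simp [polMon, Ideal.IsPrime.prod_mem_iff]

instance phiIdeal_isPrime (a : Fin m →₀ ℕ) : (phiIdeal K b a).IsPrime :=
  isPrime_span_X_image _

theorem X_mem_phiIdeal_iff {a : Fin m →₀ ℕ} {v : PolVars m b} :
    (X v : MvPolynomial (PolVars m b) K) ∈ phiIdeal K b a ↔ (v.2 : ℕ) = a v.1 :=
  X_mem_span_X_image_iff

theorem eq_of_phiIdeal_le {a a' : Fin m →₀ ℕ} (ha : ∀ i, a i < b i)
    (h : phiIdeal K b a ≤ phiIdeal K b a') : a = a' :=
  Finsupp.ext fun i =>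
    X_mem_phiIdeal_iff.mp (h ((X_mem_phiIdeal_iff (v := ⟨i, ⟨a i, ha i⟩⟩)).mpr rfl))

theorem ZeroDimData.polarIdeal_le_phiIdeal (hZ : ZeroDimData K b I) {a : Fin m →₀ ℕ}
    (ha : monomial a (1 : K) ∉ I) : polarIdeal K b I ≤ phiIdeal K b a := by
  rw [polarIdeal, Ideal.span_le]
  rintro _ ⟨c, hc, rfl⟩
  obtain ⟨i, hi⟩ : ∃ i, a i < c i := by
    by_contra! h
    exact ha (monomial_one_mem_of_le hc.1 (Finsupp.le_def.mpr h))
  exact (polMon_mem_iff_of_isPrime c).mpr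
    ⟨⟨i, ⟨a i, hZ.lt_of_monomial_notMem ha i⟩⟩, hi, X_mem_phiIdeal_iff.mpr rfl⟩

theorem exists_X_mem_of_polarIdeal_le {P : Ideal (MvPolynomial (PolVars m b) K)} [P.IsPrime]
    (hle : polarIdeal K b I ≤ P) {d : Fin m →₀ ℕ} (hd : monomial d (1 : K) ∈ I) :
    ∃ v : PolVars m b, (v.2 : ℕ) < d v.1 ∧ X v ∈ P := by
  obtain ⟨c, hc, hcd⟩ := exists_mem_minGens_le hd
  obtain ⟨v, hv, hvP⟩ := (polMon_mem_iff_of_isPrime c).mp (hle (Ideal.subset_span ⟨c, hc, rfl⟩))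
  exact ⟨v, hv.trans_le (hcd v.1), hvP⟩

theorem ZeroDimData.exists_phiIdeal_le (hZ : ZeroDimData K b I)
    {P : Ideal (MvPolynomial (PolVars m b) K)} [P.IsPrime] (hle : polarIdeal K b I ≤ P) :
    ∃ a : Fin m →₀ ℕ, monomial a (1 : K) ∉ I ∧ phiIdeal K b a ≤ P := by
  classical
  have hrow : ∀ i, ∃ j, ∃ h : j < b i, X (⟨i, ⟨j, h⟩⟩ : PolVars m b) ∈ P := fun i => by
    obtain ⟨⟨i', j⟩, hj, hjP⟩ := exists_X_mem_of_polarIdeal_le hle (hZ.2.2 i).2.1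
    obtain rfl : i' = i := by
      by_contra h
      simp [Ne.symm h] at hj
    exact ⟨j, j.2, hjP⟩
  let a : Fin m →₀ ℕ := Finsupp.equivFunOnFinite.symm fun i => Nat.find (hrow i)
  refine ⟨a, fun haI => ?_, ?_⟩
  · obtain ⟨⟨i, j⟩, hj, hjP⟩ := exists_X_mem_of_polarIdeal_le hle haI
    exact Nat.find_min (hrow i) hj ⟨j.2, hjP⟩
  · rw [phiIdeal, Ideal.span_le]
    rintro _ ⟨⟨i, j⟩, hj : (j : ℕ) = Nat.find (hrow i), rfl⟩
    obtain ⟨h, hXP⟩ := Nat.find_spec (hrow i)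
    rwa [show j = ⟨_, h⟩ from Fin.ext hj]

theorem ZeroDimData.minimalPrimes_polarIdeal (hZ : ZeroDimData K b I) :
    (polarIdeal K b I).minimalPrimes = phiIdeal K b '' {a | monomial a (1 : K) ∉ I} := by
  ext P
  constructor
  · rintro ⟨⟨hP, hle⟩, hmin⟩
    obtain ⟨a, haI, hphi⟩ := hZ.exists_phiIdeal_le hle
    exact ⟨a, haI, hphi.antisymm (hmin ⟨inferInstance, hZ.polarIdeal_le_phiIdeal haI⟩ hphi)⟩
  · rintro ⟨a, haI, rfl⟩
    refine ⟨⟨inferInstance, hZ.polarIdeal_le_phiIdeal haI⟩, fun Q ⟨hQ, hle⟩ hQa => ?_⟩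
    obtain ⟨a', ha'I, hphi⟩ := hZ.exists_phiIdeal_le hle
    rwa [← eq_of_phiIdeal_le (hZ.lt_of_monomial_notMem ha'I) (hphi.trans hQa)]

end Polarization

/-- The number of minimal prime ideals of the polarization `I^℘` equals
`dim_K S/I`, which in turn equals the number of monomials in `Mon(S∖I)`. -/
theorem statement2 {K : Type} [Field K] {n : ℕ} (b : Fin n → ℕ)
    (I : Ideal (MvPolynomial (Fin n) K)) (hI : ZeroDimData K b I) :
    (polarIdeal K b I).minimalPrimes.ncard
        = Module.finrank K (MvPolynomial (Fin n) K ⧸ I) ∧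
    Module.finrank K (MvPolynomial (Fin n) K ⧸ I)
        = {a : Fin n →₀ ℕ | (monomial a (1 : K)) ∉ I}.ncard := by
  have hdim := hI.1.finrank_quotient_eq_ncard hI.finite_setOf_monomial_notMem
  refine ⟨?_, hdim⟩
  rw [hdim, hI.minimalPrimes_polarIdeal]
  exact Set.InjOn.ncard_image fun a ha a' _ h =>
    eq_of_phiIdeal_le (hI.lt_of_monomial_notMem ha) h.le

end
end

section
/- Let u = x_1^{a_1}⋯x_n^{a_n} ∈ Mon(S∖I) be such that x_i·u ∈ I for all i, and set I' = I + (u). Then the colon ideal L(I') : (x_{1,a_1+1}⋯x_{n,a_n+1}) equals the ideal (x_{1,1}, x_{1,2}, …, x_{1,a_1}, x_{2,1}, …, x_{2,a_2}, …, x_{n,1}, …, x_{n,a_n}) of S^℘; moreover L(I) = (L(I'), x_{1,a_1+1}⋯x_{n,a_n+1}). -/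
open MvPolynomial

noncomputable section

/-!
Since `x_i·x^a ∈ I` for every `i`, the standard monomials of `I' = I + (x^a)` are those of `I`
except `x^a` itself, which gives the second equality. For the colon ideal: if `x^c ∉ I'` then
`x^a ∤ x^c`, so `c_i < a_i` for some `i`, and the variable `x_{i,c_i+1}` of the generator of `c`
does not occur in the generator of `a`, hence must divide every term of the quotient. Conversely,
lowering the `i`-th exponent of `a` to `j < a_i` gives a standard monomial of `I'` whose generator
divides `x_{i,j+1}` times the generator of `a`.
-/

namespace MvPolynomial

variable {σ R : Type*} [CommSemiring R]

theorem monomial_one_mem_of_le_s6 {J : Ideal (MvPolynomial σ R)} {c c' : σ →₀ ℕ} (h : c ≤ c')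
    (hc : monomial c (1 : R) ∈ J) : monomial c' (1 : R) ∈ J :=
  J.mem_of_dvd (monomial_dvd_monomial.2 ⟨Or.inr h, one_dvd _⟩) hc

theorem lt_of_monomial_one_notMem {J : Ideal (MvPolynomial σ R)} {i : σ} {d : ℕ}
    {c : σ →₀ ℕ} (hd : monomial (Finsupp.single i d) (1 : R) ∈ J)
    (hc : monomial c (1 : R) ∉ J) : c i < d := by
  by_contra! h
  exact hc (monomial_one_mem_of_le_s6 (Finsupp.single_le_iff.2 h) hd)

theorem monomial_one_mem_of_lt {J : Ideal (MvPolynomial σ R)} {a c : σ →₀ ℕ}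
    (hmax : ∀ i, monomial (a + Finsupp.single i 1) (1 : R) ∈ J) (hac : a < c) :
    monomial c (1 : R) ∈ J := by
  classical
  obtain ⟨hle, i, hi⟩ := Finsupp.lt_def.1 hac
  refine monomial_one_mem_of_le_s6 (fun j => ?_) (hmax i)
  rcases eq_or_ne j i with rfl | hj
  · simpa using hi
  · simpa [Finsupp.single_apply, hj.symm] using hle j

theorem monomial_one_mem_span_monomial_image_iff [Nontrivial R] {A : Set (σ →₀ ℕ)}
    {c : σ →₀ ℕ} :
    monomial c (1 : R) ∈ Ideal.span ((fun s => monomial s (1 : R)) '' A) ↔ ∃ s ∈ A, s ≤ c := by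
  classical
  simp [mem_ideal_span_monomial_image, support_monomial]

end MvPolynomial

open MvPolynomial

theorem IsMonomialIdeal.monomial_one_mem_sup_span_iff {K : Type} [Field K] {m : ℕ}
    {I : Ideal (MvPolynomial (Fin m) K)} (hI : IsMonomialIdeal I) {a c : Fin m →₀ ℕ} :
    monomial c (1 : K) ∈ I ⊔ Ideal.span {monomial a (1 : K)} ↔
      monomial c (1 : K) ∈ I ∨ a ≤ c := by
  obtain ⟨A, rfl⟩ := hI
  rw [← Set.image_singleton (f := fun s => monomial s (1 : K)), ← Ideal.span_union,
    ← Set.image_union, monomial_one_mem_span_monomial_image_iff,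
    monomial_one_mem_span_monomial_image_iff]
  simp [or_and_right, exists_or, or_comm]

section Polarization

variable {K : Type} [Field K] {m : ℕ} (b : Fin m → ℕ)

def genLExp (a : Fin m →₀ ℕ) : PolVars m b →₀ ℕ :=
  ∑ v ∈ Finset.univ.filter (fun v : PolVars m b => (v.2 : ℕ) = a v.1), Finsupp.single v 1

theorem genLExp_apply (a : Fin m →₀ ℕ) (v : PolVars m b) :
    genLExp b a v = if (v.2 : ℕ) = a v.1 then 1 else 0 := by
  classical
  simp [genLExp, Finsupp.finsetSum_apply, Finsupp.single_apply]

theorem genL_eq_monomial (a : Fin m →₀ ℕ) : genL K b a = monomial (genLExp b a) (1 : K) := by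
  rw [genL, genLExp, monomial_sum_one]
  rfl

variable {b}

theorem mem_LIdeal_iff {J : Ideal (MvPolynomial (Fin m) K)} {p : MvPolynomial (PolVars m b) K} :
    p ∈ LIdeal K b J ↔
      ∀ e ∈ p.support, ∃ c, monomial c (1 : K) ∉ J ∧ genLExp b c ≤ e := by
  have hgens : genL K b '' {c | monomial c (1 : K) ∉ J}
      = (fun e => monomial e (1 : K)) '' (genLExp b '' {c | monomial c (1 : K) ∉ J}) := by
    rw [Set.image_image]
    exact Set.image_congr fun c _ => genL_eq_monomial b c
  simp [LIdeal, hgens, mem_ideal_span_monomial_image]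

theorem genL_update_dvd_X_mul_genL {a : Fin m →₀ ℕ} {v : PolVars m b} (hv : (v.2 : ℕ) < a v.1) :
    genL K b (a.update v.1 v.2) ∣ X v * genL K b a := by
  classical
  obtain ⟨i, j⟩ := v
  have hv' : (⟨i, j⟩ : PolVars m b) ∉
      Finset.univ.filter (fun w : PolVars m b => (w.2 : ℕ) = a w.1) := by
    simpa using hv.ne
  rw [genL, genL, ← Finset.prod_insert hv']
  refine Finset.prod_dvd_prod_of_subset _ _ _ fun ⟨i', j'⟩ hw => ?_
  simp only [Finset.mem_filter, Finset.mem_univ, true_and, Finsupp.coe_update,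
    Function.update_apply] at hw
  simp only [Finset.mem_insert, Finset.mem_filter, Finset.mem_univ, true_and]
  split_ifs at hw with hi
  · subst hi
    exact Or.inl (by rw [Fin.ext hw])
  · exact Or.inr hw

theorem LIdeal_colon_span_genL {J : Ideal (MvPolynomial (Fin m) K)} {a : Fin m →₀ ℕ}
    (hab : ∀ i, a i < b i) (haJ : monomial a (1 : K) ∈ J)
    (hbelow : ∀ c, c < a → monomial c (1 : K) ∉ J) :
    (LIdeal K b J).colon (Ideal.span {genL K b a})
      = Ideal.span ((fun v => (X v : MvPolynomial (PolVars m b) K)) ''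
          {v : PolVars m b | (v.2 : ℕ) < a v.1}) := by
  apply le_antisymm
  · intro p hp
    rw [Ideal.mem_colon_span_singleton, mem_LIdeal_iff] at hp
    rw [mem_ideal_span_X_image]
    intro e he
    have he' : e + genLExp b a ∈ (p * genL K b a).support := by
      rwa [mem_support_iff, genL_eq_monomial, coeff_mul_monomial, mul_one, ← mem_support_iff]
    obtain ⟨c, hcJ, hce⟩ := hp _ he'
    obtain ⟨i, hi⟩ : ∃ i, c i < a i := by
      by_contra! h
      exact hcJ (monomial_one_mem_of_le_s6 h haJ)
    refine ⟨⟨i, ⟨c i, hi.trans (hab i)⟩⟩, hi, ?_⟩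
    -- `x_{i, c_i+1}` divides `genL c` but not `genL a`, so it must divide `e`.
    have hrow := hce ⟨i, ⟨c i, hi.trans (hab i)⟩⟩
    simp only [genLExp_apply, Finsupp.add_apply, if_true, hi.ne, if_false] at hrow
    omega
  · rw [Ideal.span_le]
    rintro _ ⟨v, hv, rfl⟩
    rw [SetLike.mem_coe, Ideal.mem_colon_span_singleton]
    have hlt : a.update v.1 v.2 < a := by
      refine Finsupp.lt_def.2 ⟨fun i => ?_, v.1, by simpa using hv⟩
      rcases eq_or_ne i v.1 with rfl | hi
      · simpa using hv.le
      · simp [Finsupp.update_apply, hi]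
    exact Ideal.mem_of_dvd _ (genL_update_dvd_X_mul_genL hv)
      (Ideal.subset_span ⟨_, hbelow _ hlt, rfl⟩)

end Polarization

/-- Let `u = x^a ∈ Mon(S∖I)` be such that `x_i·u ∈ I` for all `i`, and set
`I' = I + (u)`.  Then `L(I') : (x_{1,a_1+1}⋯x_{n,a_n+1})` equals the ideal of `S^℘`
generated by the variables `x_{i,j}` with `1 ≤ j ≤ a_i`; moreover
`L(I) = (L(I'), x_{1,a_1+1}⋯x_{n,a_n+1})`. -/
theorem statement6 {K : Type} [Field K] {n : ℕ} (b : Fin n → ℕ)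
    (I : Ideal (MvPolynomial (Fin n) K)) (hI : ZeroDimData K b I)
    (a : Fin n →₀ ℕ) (ha : (monomial a (1 : K)) ∉ I)
    (hmax : ∀ i : Fin n, (monomial (a + Finsupp.single i 1) (1 : K)) ∈ I)
    (I' : Ideal (MvPolynomial (Fin n) K))
    (hI' : I' = I ⊔ Ideal.span {(monomial a (1 : K) : MvPolynomial (Fin n) K)}) :
    (LIdeal K b I').colon (Ideal.span {genL K b a})
      = Ideal.span ((fun v => (X v : MvPolynomial (PolVars n b) K)) ''
          {v : PolVars n b | (v.2 : ℕ) < a v.1}) ∧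
    LIdeal K b I = LIdeal K b I' ⊔ Ideal.span {genL K b a} := by
  obtain ⟨hmon, -, hb⟩ := hI
  have memI' : ∀ c, monomial c (1 : K) ∈ I' ↔ monomial c (1 : K) ∈ I ∨ a ≤ c := fun c => by
    rw [hI', hmon.monomial_one_mem_sup_span_iff]
  have hstd : {c | monomial c (1 : K) ∉ I} = insert a {c | monomial c (1 : K) ∉ I'} := by
    ext c
    simp only [Set.mem_insert_iff, Set.mem_ofPred_eq, memI', not_or]
    rcases eq_or_ne c a with rfl | hca
    · simpa using ha
    · rw [or_iff_right hca, iff_self_and]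
      exact fun hc hac => hc (monomial_one_mem_of_lt hmax (lt_of_le_of_ne hac hca.symm))
  refine ⟨LIdeal_colon_span_genL (fun i => lt_of_monomial_one_notMem (hb i).2.1 ha)
    ((memI' a).2 (Or.inr le_rfl)) fun c hca => ?_, ?_⟩
  · rw [memI', not_or]
    exact ⟨fun hc => ha (monomial_one_mem_of_le_s6 hca.le hc), hca.not_ge⟩
  · rw [LIdeal, LIdeal, hstd, Set.image_insert_eq, Ideal.span_insert, sup_comm]
end
end
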